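/- arXiv:1805.00114 — 5 statements merged into one kernel-verified Lean document; each statement's English description precedes it below -/
import Mathlib

section
/- The edge polynomials e_1,...,e_N defined by e_i(ξ) = -∑_{k=0}^{i-1} h_k'(ξ) are linearly independent (they form a basis of the space of polynomials of degree ≤ N-1). -/
open Polynomial Finset

/-- The edge polynomials `e 1, ..., e N`, where
`e i = -∑_{k=0}^{i-1} (h k)'`, are linearly independent (they form a basis of the
space of polynomials of degree ≤ N-1). -/
theorem stmt2 (N : ℕ) (ξ : ℕ → ℝ) (h e : ℕ → Polynomial ℝ)
    (hξmono : ∀ i j, i < j → j ≤ N → ξ i < ξ j)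
    (hξmem : ∀ i ≤ N, ξ i ∈ Set.Icc (-1 : ℝ) 1)
    (hdeg : ∀ i ≤ N, (h i).natDegree ≤ N)
    (heval : ∀ i ≤ N, ∀ j ≤ N, (h i).eval (ξ j) = if i = j then 1 else 0)
    (he : ∀ i, e i = -∑ k ∈ range i, derivative (h k)) :
    LinearIndependent ℝ (fun i : Fin N => e (i.val + 1)) ∧
      Submodule.span ℝ (Set.range (fun i : Fin N => e (i.val + 1))) =
        Polynomial.degreeLT ℝ N := by
  -- membership in degreeLT
  have hmem : ∀ i : Fin N, e (i.val + 1) ∈ degreeLT ℝ N := by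
    intro i
    rw [he]
    refine Submodule.neg_mem _ (Submodule.sum_mem _ ?_)
    intro k hk
    rw [Polynomial.mem_degreeLT]
    have hk' : k ≤ N := by have := mem_range.mp hk; omega
    by_cases h0 : h k = 0
    · simp [h0]
    · calc degree (derivative (h k)) < degree (h k) := degree_derivative_lt h0
        _ ≤ (N : WithBot ℕ) :=
          le_trans degree_le_natDegree (by exact_mod_cast hdeg k hk')
  -- partial sum polynomials
  set E : ℕ → Polynomial ℝ := fun m => ∑ k ∈ range m, h k with hE
  have hEeval : ∀ m ≤ N + 1, ∀ j ≤ N, (E m).eval (ξ j) = if j < m then 1 else 0 := by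
    intro m hm j hj
    rw [hE]
    simp only [eval_finset_sum]
    rw [Finset.sum_congr rfl (fun k hk => heval k (by have := mem_range.mp hk; omega) j hj)]
    rw [Finset.sum_ite_eq' (range m) j (fun _ => (1 : ℝ))]
    simp [Finset.mem_range]
  have hderE : ∀ m, derivative (E m) = -(e m) := by
    intro m
    rw [he, hE, map_sum, neg_neg]
  -- linear independence
  have hli : LinearIndependent ℝ (fun i : Fin N => e (i.val + 1)) := by
    rw [Fintype.linearIndependent_iff]
    intro c hc j
    set P : Polynomial ℝ := ∑ i : Fin N, c i • E (i.val + 1) with hP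
    have hderP : derivative P = 0 := by
      rw [hP, map_sum]
      have : ∀ i : Fin N, derivative (c i • E (i.val + 1)) = -(c i • e (i.val + 1)) := by
        intro i
        rw [derivative_smul, hderE, smul_neg]
      rw [Finset.sum_congr rfl (fun i _ => this i)]
      rw [Finset.sum_neg_distrib, hc, neg_zero]
    have hconst : ∃ a : ℝ, P = C a := by
      rcases Polynomial.natDegree_eq_zero.mp
        (Polynomial.natDegree_eq_zero_of_derivative_eq_zero hderP) with ⟨a, ha⟩
      exact ⟨a, ha.symm⟩
    rcases hconst with ⟨a, ha⟩
    have hPeval : ∀ m ≤ N, P.eval (ξ m) =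
        ∑ i : Fin N, c i * (if m < i.val + 1 then 1 else 0) := by
      intro m hm
      rw [hP]
      simp only [eval_finset_sum, eval_smul, smul_eq_mul]
      exact Finset.sum_congr rfl fun i _ =>
        by rw [hEeval (i.val + 1) (by omega) m hm]
    have heq : P.eval (ξ j.val) = P.eval (ξ (j.val + 1)) := by
      rw [ha, eval_C, eval_C]
    rw [hPeval j.val (by omega), hPeval (j.val + 1) (by omega)] at heq
    have hsub : ∑ i : Fin N, (c i * (if j.val < i.val + 1 then (1:ℝ) else 0)
        - c i * (if j.val + 1 < i.val + 1 then 1 else 0)) = 0 := by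
      rw [Finset.sum_sub_distrib, heq, sub_self]
    have hsingle : ∑ i : Fin N, (c i * (if j.val < i.val + 1 then (1:ℝ) else 0)
        - c i * (if j.val + 1 < i.val + 1 then 1 else 0)) = c j := by
      rw [Finset.sum_eq_single j]
      · simp
      · intro i _ hij
        have : i.val ≠ j.val := fun hv => hij (Fin.ext hv)
        split_ifs with h1 h2 h2 <;> [skip; omega; omega; skip] <;> ring
      · intro hj'; exact absurd (Finset.mem_univ j) hj'
    rw [hsingle] at hsub
    exact hsub
  refine ⟨hli, ?_⟩
  -- span part
  set v : Fin N → degreeLT ℝ N := fun i => ⟨e (i.val + 1), hmem i⟩ with hv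
  have hcomp : (fun i : Fin N => e (i.val + 1)) = (degreeLT ℝ N).subtype ∘ v := rfl
  have hliv : LinearIndependent ℝ v := by
    apply LinearIndependent.of_comp (degreeLT ℝ N).subtype
    rw [← hcomp]; exact hli
  have hfd : FiniteDimensional ℝ (degreeLT ℝ N) :=
    LinearEquiv.finiteDimensional (degreeLTEquiv ℝ N).symm
  have hcard : Fintype.card (Fin N) = Module.finrank ℝ (degreeLT ℝ N) := by
    rw [Fintype.card_fin, (degreeLTEquiv ℝ N).finrank_eq, Module.finrank_fin_fun]
  have htop : Submodule.span ℝ (Set.range v) = ⊤ :=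
    hliv.span_eq_top_of_card_eq_finrank' hcard
  rw [hcomp, Set.range_comp, ← Submodule.map_span, htop, Submodule.map_subtype_top]
end

section
/- The edge polynomials satisfy the integral property ∫_{ξ_{j-1}}^{ξ_j} e_i(ξ) dξ = δ_{ij} for all i, j ∈ {1,...,N}. -/
open Polynomial Finset

lemma poly_ftc (p : Polynomial ℝ) (a b : ℝ) :
    (∫ x in a..b, (derivative p).eval x) = p.eval b - p.eval a := by
  apply intervalIntegral.integral_deriv_eq_sub' (fun x => p.eval x)
  · funext x; simp [Polynomial.deriv]
  · intro x _; exact (p.hasDerivAt x).differentiableAt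
  · exact (Polynomial.continuous _).continuousOn

/-- The edge polynomials satisfy
`∫_{ξ (j-1)}^{ξ j} e i = δ_{ij}` for all `i, j ∈ {1, ..., N}`. -/
theorem stmt3 (N : ℕ) (ξ : ℕ → ℝ) (h e : ℕ → Polynomial ℝ)
    (hξmono : ∀ i j, i < j → j ≤ N → ξ i < ξ j)
    (hξmem : ∀ i ≤ N, ξ i ∈ Set.Icc (-1 : ℝ) 1)
    (hdeg : ∀ i ≤ N, (h i).natDegree ≤ N)
    (heval : ∀ i ≤ N, ∀ j ≤ N, (h i).eval (ξ j) = if i = j then 1 else 0)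
    (he : ∀ i, e i = -∑ k ∈ range i, derivative (h k)) :
    ∀ i ∈ Icc 1 N, ∀ j ∈ Icc 1 N,
      (∫ x in (ξ (j - 1))..(ξ j), (e i).eval x) = if i = j then 1 else 0 := by
  intro i hi j hj
  simp only [mem_Icc] at hi hj
  have key : (e i) = derivative (-∑ k ∈ range i, h k) := by
    rw [he]; simp
  rw [key, poly_ftc]
  have e1 : ∀ k < i, (h k).eval (ξ j) = if k = j then 1 else 0 := fun k hk =>
    heval k (le_trans (Nat.le_of_lt_succ (Nat.lt_succ_of_lt hk)) hi.2) j hj.2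
  have e2 : ∀ k < i, (h k).eval (ξ (j - 1)) = if k = j - 1 then 1 else 0 := fun k hk =>
    heval k (le_trans (Nat.le_of_lt_succ (Nat.lt_succ_of_lt hk)) hi.2) (j - 1)
      (le_trans (Nat.sub_le j 1) hj.2)
  simp only [eval_neg, eval_finset_sum]
  rw [Finset.sum_congr rfl (fun k hk => e1 k (mem_range.mp hk)),
      Finset.sum_congr rfl (fun k hk => e2 k (mem_range.mp hk))]
  rw [Finset.sum_ite_eq' (range i) j (fun _ => (1 : ℝ)),
      Finset.sum_ite_eq' (range i) (j - 1) (fun _ => (1 : ℝ))]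
  simp only [mem_range]
  split_ifs <;> norm_num <;> omega
end

section
/- Let M0 ∈ ℝ^{n×n} and M1 ∈ ℝ^{m×m} be symmetric positive definite matrices, E ∈ ℝ^{m×n}, and T ∈ ℝ^{b×n}. Suppose F ∈ ℝ^n satisfies Eᵀ M1 E F + M0 F = -Tᵀ Ê. Then Ẽ := M1 E F satisfies E M0^{-1} Eᵀ Ẽ + M1^{-1} Ẽ = -E M0^{-1} Tᵀ Ê. -/
open Matrix

/-- If `M0`, `M1` are SPD and `F` solves the discrete Neumann system
`Eᵀ M1 E F + M0 F = -Tᵀ Ê`, then `Ẽ := M1 E F` solves the discrete Dirichlet system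
`E M0⁻¹ Eᵀ Ẽ + M1⁻¹ Ẽ = -E M0⁻¹ Tᵀ Ê`. -/
theorem stmt10 (n m b : ℕ)
    (M0 : Matrix (Fin n) (Fin n) ℝ) (M1 : Matrix (Fin m) (Fin m) ℝ)
    (hM0 : M0.PosDef) (hM0s : M0.IsSymm) (hM1 : M1.PosDef) (hM1s : M1.IsSymm)
    (E : Matrix (Fin m) (Fin n) ℝ) (T : Matrix (Fin b) (Fin n) ℝ)
    (Ehat : Fin b → ℝ) (F : Fin n → ℝ)
    (hF : Eᵀ.mulVec (M1.mulVec (E.mulVec F)) + M0.mulVec F = -(Tᵀ.mulVec Ehat))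
    (Ed : Fin m → ℝ) (hEd : Ed = M1.mulVec (E.mulVec F)) :
    E.mulVec (M0⁻¹.mulVec (Eᵀ.mulVec Ed)) + M1⁻¹.mulVec Ed =
      -(E.mulVec (M0⁻¹.mulVec (Tᵀ.mulVec Ehat))) := by
  have h0 : M0⁻¹.mulVec (M0.mulVec F) = F := by
    rw [Matrix.mulVec_mulVec, Matrix.nonsing_inv_mul _ ((isUnit_iff_isUnit_det M0).mp hM0.isUnit), Matrix.one_mulVec]
  have h1 : M1⁻¹.mulVec Ed = E.mulVec F := by
    rw [hEd, Matrix.mulVec_mulVec, Matrix.nonsing_inv_mul _ ((isUnit_iff_isUnit_det M1).mp hM1.isUnit), Matrix.one_mulVec]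
  have hE : Eᵀ.mulVec Ed = -(Tᵀ.mulVec Ehat) - M0.mulVec F := by
    rw [hEd]; linear_combination (norm := module) hF
  rw [h1, hE]
  have : M0⁻¹.mulVec (-(Tᵀ.mulVec Ehat) - M0.mulVec F)
      = -(M0⁻¹.mulVec (Tᵀ.mulVec Ehat)) - F := by
    rw [Matrix.mulVec_sub, Matrix.mulVec_neg, h0]
  rw [this, Matrix.mulVec_sub, Matrix.mulVec_neg]
  abel
end

section
/- Under the hypotheses that M0, M1 are symmetric positive definite, F solves Eᵀ M1 E F + M0 F = -Tᵀ Ê, and Ẽ = M1 E F, the discrete norms agree: (Tᵀ Ê + Eᵀ Ẽ)ᵀ M0^{-1} (Tᵀ Ê + Eᵀ Ẽ) + Ẽᵀ M1^{-1} Ẽ = Fᵀ M0 F + Fᵀ Eᵀ M1 E F. -/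
open Matrix

/-- Under the hypotheses that `M0`, `M1` are SPD, `F` solves
`Eᵀ M1 E F + M0 F = -Tᵀ Ê` and `Ẽ = M1 E F`, the discrete norms agree:
`(Tᵀ Ê + Eᵀ Ẽ)ᵀ M0⁻¹ (Tᵀ Ê + Eᵀ Ẽ) + Ẽᵀ M1⁻¹ Ẽ = Fᵀ M0 F + Fᵀ Eᵀ M1 E F`. -/
theorem stmt13 (n m b : ℕ)
    (M0 : Matrix (Fin n) (Fin n) ℝ) (M1 : Matrix (Fin m) (Fin m) ℝ)
    (hM0 : M0.PosDef) (hM0s : M0.IsSymm) (hM1 : M1.PosDef) (hM1s : M1.IsSymm)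
    (E : Matrix (Fin m) (Fin n) ℝ) (T : Matrix (Fin b) (Fin n) ℝ)
    (Ehat : Fin b → ℝ) (F : Fin n → ℝ)
    (hF : Eᵀ.mulVec (M1.mulVec (E.mulVec F)) + M0.mulVec F = -(Tᵀ.mulVec Ehat))
    (Ed : Fin m → ℝ) (hEd : Ed = M1.mulVec (E.mulVec F)) :
    (Tᵀ.mulVec Ehat + Eᵀ.mulVec Ed) ⬝ᵥ M0⁻¹.mulVec (Tᵀ.mulVec Ehat + Eᵀ.mulVec Ed)
        + Ed ⬝ᵥ M1⁻¹.mulVec Ed =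
      F ⬝ᵥ M0.mulVec F + F ⬝ᵥ Eᵀ.mulVec (M1.mulVec (E.mulVec F)) := by
  have h0 : M0⁻¹ * M0 = 1 := nonsing_inv_mul M0 (isUnit_iff_isUnit_det M0 |>.mp hM0.isUnit)
  have h1 : M1⁻¹ * M1 = 1 := nonsing_inv_mul M1 (isUnit_iff_isUnit_det M1 |>.mp hM1.isUnit)
  have key : Tᵀ.mulVec Ehat + Eᵀ.mulVec Ed = -(M0.mulVec F) := by
    subst hEd
    have := hF
    rw [← neg_eq_iff_eq_neg] at this
    rw [← this]
    abel
  rw [key, hEd]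
  have hinv0 : M0⁻¹.mulVec (M0.mulVec F) = F := by
    rw [mulVec_mulVec, h0, one_mulVec]
  have hinv1 : M1⁻¹.mulVec (M1.mulVec (E.mulVec F)) = E.mulVec F := by
    rw [mulVec_mulVec, h1, one_mulVec]
  rw [neg_dotProduct, mulVec_neg, dotProduct_neg, neg_neg, hinv0, hinv1]
  rw [dotProduct_comm (M0.mulVec F) F]
  congr 1
  rw [dotProduct_mulVec, ← mulVec_transpose]
  exact dotProduct_comm _ _
end

section
/- Let h_i, e_j be as in the 1D construction and consider the 2D tensor-product expansion F(ξ,η) = ∑_{i,j=0}^N F_{i,j} h_i(ξ) h_j(η). Then the vector curl of F is curl F = (∑_{i=0}^N ∑_{j=1}^N (F_{i,j} - F_{i,j-1}) h_i(ξ) e_j(η), ∑_{i=1}^N ∑_{j=0}^N (F_{i-1,j} - F_{i,j}) e_i(ξ) h_j(η)). -/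
open Polynomial Finset

/-!
The Lagrange basis is a partition of unity: `∑ h_k - 1` has degree at most `N` and vanishes at
the `N + 1` nodes. Hence `∑ h_k' = 0`, and summation by parts turns a derivative
`∑ a_j h_j'` into `∑ (a_j - a_{j-1}) e_j`, the edge polynomial `e_j` being minus the partial sum
of the `h_k'`. Applied in each variable separately this gives both components of the curl.
-/

theorem sum_eq_one_of_eval_eq_ite {R : Type*} [CommRing R] [IsDomain R] {N : ℕ} {ξ : ℕ → R}
    {h : ℕ → R[X]} (hdeg : ∀ i ≤ N, (h i).natDegree ≤ N)
    (heval : ∀ i ≤ N, ∀ j ≤ N, (h i).eval (ξ j) = if i = j then 1 else 0) :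
    ∑ k ∈ range (N + 1), h k = 1 := by
  have hinj : Function.Injective fun i : Fin (N + 1) => ξ i := by
    intro a b (hab : ξ a = ξ b)
    have := heval a a.is_le b b.is_le
    rw [← hab, heval a a.is_le a a.is_le] at this
    exact Fin.ext (by simpa using this)
  refine eq_of_natDegree_lt_card_of_eval_eq _ _ hinj (fun i => ?_) ?_
  · rw [eval_finsetSum, eval_one, sum_eq_single_of_mem (i : ℕ) (mem_range.2 i.is_lt)]
    · simp [heval i i.is_le i i.is_le]
    · intro k hk hki
      simp [heval k (Nat.le_of_lt_succ (mem_range.1 hk)) i i.is_le, hki]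
  · rw [natDegree_one, Nat.max_zero, Fintype.card_fin, Nat.lt_succ_iff]
    exact natDegree_sum_le_of_forall_le _ _ fun k hk => hdeg k (Nat.le_of_lt_succ (mem_range.1 hk))

theorem sum_range_mul_eq_sum_Icc_sub_mul_of_sum_eq_zero {R : Type*} [CommRing R] (N : ℕ)
    (a g : ℕ → R) (hg : ∑ k ∈ range (N + 1), g k = 0) :
    ∑ j ∈ range (N + 1), a j * g j =
      ∑ j ∈ Icc 1 N, (a j - a (j - 1)) * -∑ k ∈ range j, g k := by
  have := sum_range_by_parts a g (N + 1)
  simp only [smul_eq_mul, Nat.add_sub_cancel, hg, mul_zero, zero_sub] at this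
  rw [this, ← Ico_add_one_right_eq_Icc, sum_Ico_eq_sum_range, Nat.add_sub_cancel,
    ← sum_neg_distrib]
  refine sum_congr rfl fun i _ => ?_
  rw [add_comm 1 i, Nat.add_sub_cancel]
  ring

theorem hasDerivAt_sum_mul_eval_of_sum_eq_one {N : ℕ} {h e : ℕ → ℝ[X]}
    (hsum : ∑ k ∈ range (N + 1), h k = 1)
    (he : ∀ i, e i = -∑ k ∈ range i, derivative (h k)) (a : ℕ → ℝ) (t : ℝ) :
    HasDerivAt (fun s => ∑ j ∈ range (N + 1), a j * (h j).eval s)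
      (∑ j ∈ Icc 1 N, (a j - a (j - 1)) * (e j).eval t) t := by
  have hderiv : HasDerivAt (fun s => ∑ j ∈ range (N + 1), a j * (h j).eval s)
      (∑ j ∈ range (N + 1), a j * (derivative (h j)).eval t) t :=
    HasDerivAt.fun_sum fun j _ => ((h j).hasDerivAt t).const_mul (a j)
  have hzero : ∑ k ∈ range (N + 1), (derivative (h k)).eval t = 0 := by
    rw [← eval_finsetSum, ← derivative_sum, hsum, derivative_one, eval_zero]
  convert hderiv using 1
  rw [sum_range_mul_eq_sum_Icc_sub_mul_of_sum_eq_zero N a _ hzero]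
  simp only [he, eval_neg, eval_finsetSum]

theorem stmt17_general (N : ℕ) (ξ : ℕ → ℝ) (h e : ℕ → Polynomial ℝ)
    (hdeg : ∀ i ≤ N, (h i).natDegree ≤ N)
    (heval : ∀ i ≤ N, ∀ j ≤ N, (h i).eval (ξ j) = if i = j then 1 else 0)
    (he : ∀ i, e i = -∑ k ∈ range i, derivative (h k))
    (c : ℕ → ℕ → ℝ) (F : ℝ → ℝ → ℝ)
    (hF : ∀ x y, F x y = ∑ i ∈ range (N + 1), ∑ j ∈ range (N + 1),
      c i j * (h i).eval x * (h j).eval y) :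
    ∀ x y,
      (deriv (fun t => F x t) y =
        ∑ i ∈ range (N + 1), ∑ j ∈ Icc 1 N,
          (c i j - c i (j - 1)) * (h i).eval x * (e j).eval y) ∧
      (-deriv (fun s => F s y) x =
        ∑ i ∈ Icc 1 N, ∑ j ∈ range (N + 1),
          (c (i - 1) j - c i j) * (e i).eval x * (h j).eval y) := by
  have hsum := sum_eq_one_of_eval_eq_ite hdeg heval
  intro x y
  constructor
  · have hF' : (fun t => F x t) = fun t => ∑ i ∈ range (N + 1), ∑ j ∈ range (N + 1),
        (c i j * (h i).eval x) * (h j).eval t := funext fun t => hF x t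
    rw [hF', (HasDerivAt.fun_sum fun i _ => hasDerivAt_sum_mul_eval_of_sum_eq_one hsum he
      (fun j => c i j * (h i).eval x) y).deriv]
    exact sum_congr rfl fun i _ => sum_congr rfl fun j _ => by ring
  · have hF' : (fun s => F s y) = fun s => ∑ j ∈ range (N + 1), ∑ i ∈ range (N + 1),
        (c i j * (h j).eval y) * (h i).eval s := funext fun s => by
      rw [hF, sum_comm]; exact sum_congr rfl fun j _ => sum_congr rfl fun i _ => by ring
    rw [hF', (HasDerivAt.fun_sum fun j _ => hasDerivAt_sum_mul_eval_of_sum_eq_one hsum he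
      (fun i => c i j * (h j).eval y) x).deriv, sum_comm, ← sum_neg_distrib]
    exact sum_congr rfl fun i _ => by
      rw [← sum_neg_distrib]; exact sum_congr rfl fun j _ => by ring

/-- For the 2D tensor-product expansion
`F(ξ,η) = ∑_{i,j=0}^N c i j · h i (ξ) · h j (η)` in Lagrange bases, the vector curl
`curl F = (∂F/∂η, -∂F/∂ξ)` has the expansion
`(∑_{i=0}^N ∑_{j=1}^N (c i j - c i (j-1)) h i (ξ) e j (η),
  ∑_{i=1}^N ∑_{j=0}^N (c (i-1) j - c i j) e i (ξ) h j (η))`. -/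
theorem stmt17 (N : ℕ) (ξ : ℕ → ℝ) (h e : ℕ → Polynomial ℝ)
    (hξmono : ∀ i j, i < j → j ≤ N → ξ i < ξ j)
    (hξmem : ∀ i ≤ N, ξ i ∈ Set.Icc (-1 : ℝ) 1)
    (hdeg : ∀ i ≤ N, (h i).natDegree ≤ N)
    (heval : ∀ i ≤ N, ∀ j ≤ N, (h i).eval (ξ j) = if i = j then 1 else 0)
    (he : ∀ i, e i = -∑ k ∈ range i, derivative (h k))
    (c : ℕ → ℕ → ℝ) (F : ℝ → ℝ → ℝ)
    (hF : ∀ x y, F x y = ∑ i ∈ range (N + 1), ∑ j ∈ range (N + 1),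
      c i j * (h i).eval x * (h j).eval y) :
    ∀ x y,
      (deriv (fun t => F x t) y =
        ∑ i ∈ range (N + 1), ∑ j ∈ Icc 1 N,
          (c i j - c i (j - 1)) * (h i).eval x * (e j).eval y) ∧
      (-deriv (fun s => F s y) x =
        ∑ i ∈ Icc 1 N, ∑ j ∈ range (N + 1),
          (c (i - 1) j - c i j) * (e i).eval x * (h j).eval y) :=
  stmt17_general N ξ h e hdeg heval he c F hF
end
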